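/- For every subgroup H of SL(2,k) that is contained in a torus, the normalizer of a torus, or a Borel (solvable upper-triangular) subgroup, and for all α, β ∈ H, the identity Tr(α²β²α²β²) = Tr(α⁴β⁴) holds. -/
import Mathlib


/-- SL(2,k). -/
abbrev SL2 (k : Type) [CommRing k] := Matrix.SpecialLinearGroup (Fin 2) k

/-- The diagonal torus. -/
def DiagSet (k : Type) [CommRing k] : Set (SL2 k) :=
  {M | (M : Matrix (Fin 2) (Fin 2) k) 0 1 = 0 ∧ (M : Matrix (Fin 2) (Fin 2) k) 1 0 = 0}

/-- The normalizer of the diagonal torus: diagonal and antidiagonal matrices. -/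
def NormTorusSet (k : Type) [CommRing k] : Set (SL2 k) :=
  DiagSet k ∪
    {M | (M : Matrix (Fin 2) (Fin 2) k) 0 0 = 0 ∧ (M : Matrix (Fin 2) (Fin 2) k) 1 1 = 0}

/-- The Borel subgroup of upper-triangular matrices. -/
def BorelSet (k : Type) [CommRing k] : Set (SL2 k) :=
  {M | (M : Matrix (Fin 2) (Fin 2) k) 1 0 = 0}

lemma tr_conj {k : Type} [CommRing k] (g X : SL2 k) :
    Matrix.trace ((g * X * g⁻¹ : SL2 k) : Matrix (Fin 2) (Fin 2) k) =
      Matrix.trace ((X : Matrix (Fin 2) (Fin 2) k)) := by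
  have h1 : ((g * X * g⁻¹ : SL2 k) : Matrix (Fin 2) (Fin 2) k) =
      (g : Matrix (Fin 2) (Fin 2) k) * X * ((g⁻¹ : SL2 k) : Matrix (Fin 2) (Fin 2) k) := by
    simp
  have h2 : ((g⁻¹ : SL2 k) : Matrix (Fin 2) (Fin 2) k) * (g : Matrix (Fin 2) (Fin 2) k) = 1 := by
    rw [← Matrix.SpecialLinearGroup.coe_mul, inv_mul_cancel]
    simp
  rw [h1, Matrix.trace_mul_comm, ← Matrix.mul_assoc, h2, Matrix.one_mul]

lemma key_tr {k : Type} [CommRing k] (A B : Matrix (Fin 2) (Fin 2) k)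
    (hA : A 1 0 = 0) (hB : B 1 0 = 0) :
    Matrix.trace (A * B * A * B) = Matrix.trace (A * A * B * B) := by
  simp only [Matrix.trace_fin_two, Matrix.mul_apply, Fin.sum_univ_two, hA, hB]
  ring

lemma sq_lower {k : Type} [CommRing k] (M : SL2 k)
    (h : M ∈ NormTorusSet k ∪ BorelSet k) :
    ((M ^ 2 : SL2 k) : Matrix (Fin 2) (Fin 2) k) 1 0 = 0 := by
  have hc : ((M ^ 2 : SL2 k) : Matrix (Fin 2) (Fin 2) k) =
      (M : Matrix (Fin 2) (Fin 2) k) * M := by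
    rw [sq]; simp
  rw [hc, Matrix.mul_apply, Fin.sum_univ_two]
  rcases h with (⟨h1, h2⟩ | ⟨h1, h2⟩) | h1
  · simp [h1, h2]
  · simp [h1, h2]
  · have h1' : (M : Matrix (Fin 2) (Fin 2) k) 1 0 = 0 := h1
    simp [h1']

/-- if a subgroup H of SL(2,k) is contained (up to conjugacy) in the torus, the
normalizer of the torus, or a Borel subgroup, then Tr(α²β²α²β²) = Tr(α⁴β⁴) for all α, β ∈ H. -/
theorem stmt5 (k : Type) [Field k] (H : Subgroup (SL2 k))
    (hsub : ∃ g : SL2 k,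
      (∀ h ∈ H, g * h * g⁻¹ ∈ DiagSet k) ∨
      (∀ h ∈ H, g * h * g⁻¹ ∈ NormTorusSet k) ∨
      (∀ h ∈ H, g * h * g⁻¹ ∈ BorelSet k)) :
    ∀ α ∈ H, ∀ β ∈ H,
      Matrix.trace ((α ^ 2 * β ^ 2 * α ^ 2 * β ^ 2 : SL2 k) : Matrix (Fin 2) (Fin 2) k) =
        Matrix.trace ((α ^ 4 * β ^ 4 : SL2 k) : Matrix (Fin 2) (Fin 2) k) := by
  obtain ⟨g, hg⟩ := hsub
  intro α hα β hβ
  -- every element of gHg⁻¹ lies in NormTorusSet ∪ BorelSet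
  have hmem : ∀ h ∈ H, g * h * g⁻¹ ∈ NormTorusSet k ∪ BorelSet k := by
    intro h hh
    rcases hg with hg | hg | hg
    · exact Or.inl (Or.inl (hg h hh))
    · exact Or.inl (hg h hh)
    · exact Or.inr (hg h hh)
  set a : SL2 k := g * α * g⁻¹ with ha
  set b : SL2 k := g * β * g⁻¹ with hb
  have hA : ((a ^ 2 : SL2 k) : Matrix (Fin 2) (Fin 2) k) 1 0 = 0 :=
    sq_lower a (hmem α hα)
  have hB : ((b ^ 2 : SL2 k) : Matrix (Fin 2) (Fin 2) k) 1 0 = 0 :=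
    sq_lower b (hmem β hβ)
  have e1 : g * (α ^ 2 * β ^ 2 * α ^ 2 * β ^ 2) * g⁻¹ = a ^ 2 * b ^ 2 * a ^ 2 * b ^ 2 := by
    rw [ha, hb, conj_pow, conj_pow]; group
  have e2 : g * (α ^ 4 * β ^ 4) * g⁻¹ = a ^ 2 * a ^ 2 * b ^ 2 * b ^ 2 := by
    rw [ha, hb, conj_pow, conj_pow]; group
  have t1 := tr_conj g (α ^ 2 * β ^ 2 * α ^ 2 * β ^ 2)
  have t2 := tr_conj g (α ^ 4 * β ^ 4)
  rw [e1] at t1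
  rw [e2] at t2
  rw [← t1, ← t2]
  have c1 : ((a ^ 2 * b ^ 2 * a ^ 2 * b ^ 2 : SL2 k) : Matrix (Fin 2) (Fin 2) k) =
      ((a ^ 2 : SL2 k) : Matrix (Fin 2) (Fin 2) k) * (b ^ 2 : SL2 k) * (a ^ 2 : SL2 k) *
        (b ^ 2 : SL2 k) := by simp
  have c2 : ((a ^ 2 * a ^ 2 * b ^ 2 * b ^ 2 : SL2 k) : Matrix (Fin 2) (Fin 2) k) =
      ((a ^ 2 : SL2 k) : Matrix (Fin 2) (Fin 2) k) * (a ^ 2 : SL2 k) * (b ^ 2 : SL2 k) *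
        (b ^ 2 : SL2 k) := by simp
  rw [c1, c2]
  exact key_tr _ _ hA hB
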